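/- If E ⊆ ℝ is a measurable set that is 2π-translation congruent to [0, 2π), then the functions (2π)^{-1/2} e^{iℓs} restricted to E, ℓ ∈ ℤ, form an orthonormal basis of L²(E). -/

import Mathlib

open MeasureTheory

/-- `P` is a measurable partition (modulo null sets) of `E`, indexed by `ℤ`. -/
def IsMeasPartitionZ (P : ℤ → Set ℝ) (E : Set ℝ) : Prop :=
  (∀ n, MeasurableSet (P n)) ∧ (∀ m n : ℤ, m ≠ n → volume (P m ∩ P n) = 0) ∧
    volume (symmDiff (⋃ n, P n) E) = 0

/-- `E` and `F` are translation congruent modulo 2π. -/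
def TransCongr2pi (E F : Set ℝ) : Prop :=
  ∃ P : ℤ → Set ℝ, IsMeasPartitionZ P E ∧
    IsMeasPartitionZ (fun n => (fun x => x + 2 * Real.pi * n) '' P n) F

/-!
The covering map `π : ℝ → ℝ/2πℤ` is invariant under the translations `x ↦ x + 2πn` that carry
the pieces `E_n` of `E` onto the pieces of `[0, 2π)`, so `π` pushes Lebesgue measure on `E`
forward to Lebesgue measure on the circle. It is moreover almost injective on `E`: sending
`r ∈ [0, 2π)` to `r - 2πn`, where `n` is chosen measurably with `r ∈ E_n + 2πn`, is a
measurable inverse almost everywhere. Hence `g ↦ g ∘ π` is a unitary map `L²(ℝ/2πℤ) → L²(E)`,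
and it carries the normalised Fourier basis `(2π)^{-1/2} e^{iℓy}` of the circle to the
exponentials restricted to `E`.
-/

open Set
open scoped ENNReal

namespace MeasureTheory

section SmulMeasure

variable {α E 𝕜 : Type*} [MeasurableSpace α] {μ ν : Measure α} [NormedAddCommGroup E]
  [RCLike 𝕜] [NormedSpace 𝕜 E] {p : ℝ≥0∞} {c : ℝ≥0∞}

theorem MemLp.of_eq_smul_measure {f : α → E} (h : ν = c • μ) (hc : c ≠ ∞) (hf : MemLp f p μ) :
    MemLp f p ν :=
  h ▸ hf.smul_measure hc

namespace Lp

noncomputable def toLpOfEqSmulMeasure (h : ν = c • μ) (hc : c ≠ ∞) :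
    Lp E p μ →ₗ[𝕜] Lp E p ν where
  toFun f := ((Lp.memLp f).of_eq_smul_measure h hc).toLp f
  map_add' f g := by
    have hνμ : ν ≪ μ := h ▸ Measure.smul_absolutelyContinuous
    rw [← MemLp.toLp_add]
    exact MemLp.toLp_congr _ _ (hνμ.ae_eq (Lp.coeFn_add f g))
  map_smul' a f := by
    have hνμ : ν ≪ μ := h ▸ Measure.smul_absolutelyContinuous
    rw [RingHom.id_apply, ← MemLp.toLp_const_smul]
    exact MemLp.toLp_congr _ _ (hνμ.ae_eq (Lp.coeFn_smul a f))

theorem coeFn_toLpOfEqSmulMeasure (h : ν = c • μ) (hc : c ≠ ∞) (f : Lp E p μ) :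
    toLpOfEqSmulMeasure (𝕜 := 𝕜) h hc f =ᵐ[ν] f :=
  MemLp.coeFn_toLp ((Lp.memLp f).of_eq_smul_measure h hc)

theorem norm_toLpOfEqSmulMeasure (h : ν = c • μ) (hc0 : c ≠ 0) (hc : c ≠ ∞) (f : Lp E p μ) :
    ‖toLpOfEqSmulMeasure (𝕜 := 𝕜) h hc f‖ = c.toReal ^ (1 / p).toReal * ‖f‖ := by
  rw [toLpOfEqSmulMeasure, LinearMap.coe_mk, AddHom.coe_mk, Lp.norm_toLp, Lp.norm_def, h,
    eLpNorm_smul_measure_of_ne_zero hc0, smul_eq_mul, ENNReal.toReal_mul, ENNReal.toReal_rpow]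

variable [Fact (1 ≤ p)]

noncomputable def smulMeasureₗᵢ (h : ν = c • μ) (hc0 : c ≠ 0) (hc : c ≠ ∞) :
    Lp E p μ →ₗᵢ[𝕜] Lp E p ν where
  toLinearMap := (((c.toReal ^ (1 / p).toReal)⁻¹ : ℝ) : 𝕜) • toLpOfEqSmulMeasure h hc
  norm_map' f := by
    have hk : 0 < c.toReal ^ (1 / p).toReal :=
      Real.rpow_pos_of_pos (ENNReal.toReal_pos hc0 hc) _
    rw [LinearMap.smul_apply, norm_smul, norm_toLpOfEqSmulMeasure h hc0 hc, RCLike.norm_ofReal,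
      abs_of_pos (inv_pos.2 hk), inv_mul_cancel_left₀ hk.ne']

theorem smulMeasureₗᵢ_surjective (h : ν = c • μ) (hc0 : c ≠ 0) (hc : c ≠ ∞) :
    Function.Surjective (smulMeasureₗᵢ (E := E) (𝕜 := 𝕜) (p := p) h hc0 hc) := by
  intro g
  have hμν : μ = c⁻¹ • ν := by rw [h, smul_smul, ENNReal.inv_mul_cancel hc0 hc, one_smul]
  have hg : MemLp g p μ := (Lp.memLp g).of_eq_smul_measure hμν (ENNReal.inv_ne_top.2 hc0)
  have hk : c.toReal ^ (1 / p).toReal ≠ 0 :=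
    (Real.rpow_pos_of_pos (ENNReal.toReal_pos hc0 hc) _).ne'
  refine ⟨((c.toReal ^ (1 / p).toReal : ℝ) : 𝕜) • hg.toLp g, ?_⟩
  rw [LinearIsometry.map_smul]
  change ((_ : ℝ) : 𝕜) • ((_ : ℝ) : 𝕜) • toLpOfEqSmulMeasure h hc (hg.toLp g) = g
  rw [smul_smul, ← RCLike.ofReal_mul, mul_inv_cancel₀ hk, RCLike.ofReal_one, one_smul]
  have hνμ : ν ≪ μ := h ▸ Measure.smul_absolutelyContinuous
  exact Lp.ext ((coeFn_toLpOfEqSmulMeasure h hc _).trans (hνμ.ae_eq hg.coeFn_toLp))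

noncomputable def smulMeasureEquiv (h : ν = c • μ) (hc0 : c ≠ 0) (hc : c ≠ ∞) :
    Lp E p μ ≃ₗᵢ[𝕜] Lp E p ν :=
  LinearIsometryEquiv.ofSurjective _ (smulMeasureₗᵢ_surjective h hc0 hc)

theorem coeFn_smulMeasureEquiv (h : ν = c • μ) (hc0 : c ≠ 0) (hc : c ≠ ∞) (f : Lp E p μ) :
    smulMeasureEquiv (𝕜 := 𝕜) h hc0 hc f =ᵐ[ν]
      fun x => (((c.toReal ^ (1 / p).toReal)⁻¹ : ℝ) : 𝕜) • f x := by
  filter_upwards [Lp.coeFn_smul (((c.toReal ^ (1 / p).toReal)⁻¹ : ℝ) : 𝕜)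
    (toLpOfEqSmulMeasure (𝕜 := 𝕜) h hc f), coeFn_toLpOfEqSmulMeasure (𝕜 := 𝕜) h hc f]
    with x hsmul hcoe
  rw [← hcoe]
  exact hsmul

end Lp

end SmulMeasure

section LeftInverse

variable {X Y : Type*} [MeasurableSpace X] [MeasurableSpace Y] {μ : Measure X} {ν : Measure Y}
  {π : X → Y} {ψ : Y → X}

theorem MeasurePreserving.of_ae_leftInverse (hπ : MeasurePreserving π μ ν) (hψ : Measurable ψ)
    (h : ψ ∘ π =ᵐ[μ] id) : MeasurePreserving ψ ν μ :=
  ⟨hψ, by rw [← hπ.map_eq, Measure.map_map hψ hπ.measurable, Measure.map_congr h, Measure.map_id]⟩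

namespace Lp

variable {E : Type*} [NormedAddCommGroup E] {p : ℝ≥0∞}

theorem compMeasurePreserving_surjective (hπ : MeasurePreserving π μ ν) (hψ : Measurable ψ)
    (h : ψ ∘ π =ᵐ[μ] id) :
    Function.Surjective (Lp.compMeasurePreserving (E := E) (p := p) π hπ) := by
  intro f
  refine ⟨Lp.compMeasurePreserving ψ (hπ.of_ae_leftInverse hψ h) f, ?_⟩
  rw [← Lp.compMeasurePreserving_comp_apply]
  refine Lp.ext ((Lp.coeFn_compMeasurePreserving _ _).trans ?_)
  filter_upwards [h] with x hx
  simp only [Function.comp_apply] at hx ⊢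
  rw [hx, id]

variable (𝕜 : Type*) [NormedRing 𝕜] [Module 𝕜 E] [IsBoundedSMul 𝕜 E] [Fact (1 ≤ p)]

noncomputable def compMeasurePreservingEquiv (hπ : MeasurePreserving π μ ν) (hψ : Measurable ψ)
    (h : ψ ∘ π =ᵐ[μ] id) : Lp E p ν ≃ₗᵢ[𝕜] Lp E p μ :=
  LinearIsometryEquiv.ofSurjective (compMeasurePreservingₗᵢ 𝕜 π hπ)
    (compMeasurePreserving_surjective hπ hψ h)

theorem coeFn_compMeasurePreservingEquiv (hπ : MeasurePreserving π μ ν) (hψ : Measurable ψ)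
    (h : ψ ∘ π =ᵐ[μ] id) (g : Lp E p ν) :
    compMeasurePreservingEquiv 𝕜 hπ hψ h g =ᵐ[μ] g ∘ π :=
  coeFn_compMeasurePreserving g hπ

end Lp

end LeftInverse

end MeasureTheory

noncomputable def HilbertBasis.map {ι 𝕜 E F : Type*} [RCLike 𝕜] [NormedAddCommGroup E]
    [InnerProductSpace 𝕜 E] [NormedAddCommGroup F] [InnerProductSpace 𝕜 F]
    (b : HilbertBasis ι 𝕜 E) (U : E ≃ₗᵢ[𝕜] F) : HilbertBasis ι 𝕜 F :=
  HilbertBasis.ofRepr (U.symm.trans b.repr)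

@[simp]
theorem HilbertBasis.map_apply {ι 𝕜 E F : Type*} [RCLike 𝕜] [NormedAddCommGroup E]
    [InnerProductSpace 𝕜 E] [NormedAddCommGroup F] [InnerProductSpace 𝕜 F]
    (b : HilbertBasis ι 𝕜 E) (U : E ≃ₗᵢ[𝕜] F) (i : ι) : b.map U i = U (b i) :=
  rfl

namespace AddCircle

theorem coe_add_mul_int (T x : ℝ) (n : ℤ) : ((x + T * n : ℝ) : AddCircle T) = x := by
  rw [mul_comm, ← zsmul_eq_mul]
  simp

theorem map_coe_restrict_image_add_mul_int (T : ℝ) (s : Set ℝ) (n : ℤ) :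
    (volume.restrict ((fun x => x + T * n) '' s)).map ((↑) : ℝ → AddCircle T) =
      (volume.restrict s).map ((↑) : ℝ → AddCircle T) := by
  have hshift := (measurePreserving_add_right volume (T * n)).restrict_image_emb
    (measurableEmbedding_addRight _) s
  rw [← hshift.map_eq, Measure.map_map AddCircle.measurable_mk' (measurable_add_const _)]
  congr 1
  funext x
  exact coe_add_mul_int T x n

variable {T : ℝ} [Fact (0 < T)]

/-- `fourierBasis` is orthonormal for the Haar probability measure; this is its rescaling to
Lebesgue measure, of total mass `T`. -/
noncomputable def volumeFourierBasis :
    HilbertBasis ℤ ℂ (Lp ℂ 2 (volume : Measure (AddCircle T))) :=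
  fourierBasis.map (Lp.smulMeasureEquiv volume_eq_smul_haarAddCircle
    (by simpa using (Fact.out : 0 < T)) ENNReal.ofReal_ne_top)

theorem coeFn_volumeFourierBasis (n : ℤ) :
    volumeFourierBasis n =ᵐ[volume]
      fun y : AddCircle T => (Real.sqrt T : ℂ)⁻¹ * fourier n y := by
  have hscale : (ENNReal.ofReal T).toReal ^ (1 / (2 : ℝ≥0∞)).toReal = Real.sqrt T := by
    rw [ENNReal.toReal_ofReal (Fact.out : 0 < T).le, Real.sqrt_eq_rpow]
    norm_num
  rw [volumeFourierBasis, HilbertBasis.map_apply]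
  filter_upwards [Lp.coeFn_smulMeasureEquiv (𝕜 := ℂ) volume_eq_smul_haarAddCircle
    (by simpa using (Fact.out : 0 < T)) ENNReal.ofReal_ne_top (fourierBasis n),
    volume_eq_smul_haarAddCircle (T := T) ▸ Measure.ae_smul_measure (coeFn_fourierLp 2 n) _]
    with y hscaled hfourier
  rw [hscaled, hscale, coe_fourierBasis, hfourier, smul_eq_mul]
  push_cast
  rfl

end AddCircle

theorem exists_measurable_index_mem {α ι : Type*} [MeasurableSpace α] [MeasurableSpace ι]
    [Countable ι] [Nonempty ι] {s : ι → Set α} (hs : ∀ i, MeasurableSet (s i)) :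
    ∃ f : α → ι, Measurable f ∧ ∀ x i, x ∈ s i → x ∈ s (f x) := by
  classical
  obtain ⟨e, he⟩ := exists_surjective_nat ι
  have hfind : ∀ x, ∃ k, x ∈ s (e k) ∨ ∀ i, x ∉ s i := by
    intro x
    by_cases hx : ∃ i, x ∈ s i
    · obtain ⟨i, hi⟩ := hx
      obtain ⟨k, rfl⟩ := he i
      exact ⟨k, Or.inl hi⟩
    · exact ⟨0, Or.inr (not_exists.mp hx)⟩
  refine ⟨fun x => e (Nat.find (hfind x)), measurable_from_nat.comp (measurable_find hfind
    fun k => by measurability), fun x i hi => ?_⟩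
  exact (Nat.find_spec (hfind x)).resolve_right fun h => h i hi

namespace IsMeasPartitionZ

variable {P : ℤ → Set ℝ} {F : Set ℝ}

theorem restrict_eq_sum (hP : IsMeasPartitionZ P F) :
    volume.restrict F = Measure.sum fun n => volume.restrict (P n) := by
  obtain ⟨hmeas, hdisj, hcover⟩ := hP
  rw [← Measure.restrict_congr_set (measure_symmDiff_eq_zero_iff.mp hcover)]
  exact Measure.restrict_iUnion_ae hdisj fun n => (hmeas n).nullMeasurableSet

theorem ae_mem_unique (hP : IsMeasPartitionZ P F) :
    ∀ᵐ r, ∀ n, r ∈ P n → r ∈ F ∧ ∀ m, r ∈ P m → m = n := by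
  obtain ⟨-, hdisj, hcover⟩ := hP
  have hsub : ∀ᵐ r, ∀ n, r ∈ P n → r ∈ F := by
    filter_upwards [measure_eq_zero_iff_ae_notMem.mp hcover] with r hr n hrn
    by_contra hrF
    exact hr (mem_symmDiff.2 (Or.inl ⟨mem_iUnion.2 ⟨n, hrn⟩, hrF⟩))
  have huniq : ∀ᵐ r, ∀ m n, r ∈ P m → r ∈ P n → m = n := by
    refine ae_all_iff.2 fun m => ae_all_iff.2 fun n => ?_
    by_cases hmn : m = n
    · exact Filter.Eventually.of_forall fun _ _ _ => hmn
    · filter_upwards [measure_eq_zero_iff_ae_notMem.mp (hdisj m n hmn)] with r hr hm hn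
      exact absurd ⟨hm, hn⟩ hr
  filter_upwards [hsub, huniq] with r hsub huniq n hn
  exact ⟨hsub n hn, fun m hm => huniq m n hm hn⟩

end IsMeasPartitionZ

instance fact_two_pi_pos : Fact (0 < 2 * Real.pi) := ⟨Real.two_pi_pos⟩

section TransCongr2pi

variable {E : Set ℝ}

theorem measurePreserving_coe_restrict_of_transCongr2pi
    (hcong : TransCongr2pi E (Ico 0 (2 * Real.pi))) :
    MeasurePreserving ((↑) : ℝ → AddCircle (2 * Real.pi)) (volume.restrict E) volume := by
  obtain ⟨P, hP, hQ⟩ := hcong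
  refine ⟨AddCircle.measurable_mk', ?_⟩
  calc (volume.restrict E).map ((↑) : ℝ → AddCircle (2 * Real.pi))
      = Measure.sum fun n => (volume.restrict (P n)).map ((↑) : ℝ → AddCircle (2 * Real.pi)) := by
        rw [hP.restrict_eq_sum, Measure.map_sum AddCircle.measurable_mk'.aemeasurable]
    _ = (volume.restrict (Ico 0 (2 * Real.pi))).map ((↑) : ℝ → AddCircle (2 * Real.pi)) := by
        rw [hQ.restrict_eq_sum, Measure.map_sum AddCircle.measurable_mk'.aemeasurable]
        simp_rw [AddCircle.map_coe_restrict_image_add_mul_int]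
    _ = volume := by
        rw [Measure.restrict_congr_set Ico_ae_eq_Ioc]
        simpa using (AddCircle.measurePreserving_mk (2 * Real.pi) 0).map_eq

theorem exists_measurable_ae_leftInverse_coe_of_transCongr2pi
    (hcong : TransCongr2pi E (Ico 0 (2 * Real.pi))) :
    ∃ ψ : AddCircle (2 * Real.pi) → ℝ, Measurable ψ ∧
      ψ ∘ ((↑) : ℝ → AddCircle (2 * Real.pi)) =ᵐ[volume.restrict E] id := by
  obtain ⟨P, hP, hQ⟩ := hcong
  obtain ⟨idx, hidx, hidx_mem⟩ := exists_measurable_index_mem hQ.1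
  set rep : AddCircle (2 * Real.pi) → ℝ := fun y => AddCircle.equivIco (2 * Real.pi) 0 y
  have hrep : Measurable rep :=
    measurable_subtype_coe.comp (AddCircle.measurableEquivIco (2 * Real.pi) 0).measurable
  refine ⟨fun y => rep y - 2 * Real.pi * idx (rep y),
    hrep.sub (measurable_const.mul ((measurable_of_countable _).comp (hidx.comp hrep))), ?_⟩
  rw [Filter.EventuallyEq, hP.restrict_eq_sum, Measure.ae_sum_iff]
  intro n
  rw [ae_restrict_iff' (hP.1 n)]
  filter_upwards [(measurePreserving_add_right volume (2 * Real.pi * n)).quasiMeasurePreserving.ae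
    hQ.ae_mem_unique] with x hx hxP
  obtain ⟨hIco, huniq⟩ := hx n ⟨x, hxP, rfl⟩
  have hrep_x : rep x = x + 2 * Real.pi * n := by
    rw [← AddCircle.coe_add_mul_int (2 * Real.pi) x n]
    simp only [rep, AddCircle.equivIco_coe_eq (by rwa [zero_add] : _ ∈ Ico 0 (0 + 2 * Real.pi))]
  have hidx_x : idx (rep x) = n := by
    rw [hrep_x]
    exact huniq _ (hidx_mem _ n ⟨x, hxP, rfl⟩)
  change rep x - 2 * Real.pi * idx (rep x) = x
  rw [hidx_x, hrep_x]
  ring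

end TransCongr2pi

theorem exponentials_orthonormal_basis_of_congruent_general (E : Set ℝ)
    (hcong : TransCongr2pi E (Set.Ico 0 (2 * Real.pi))) :
    ∃ b : HilbertBasis ℤ ℂ (Lp ℂ 2 (volume.restrict E)),
      ∀ ℓ : ℤ, (b ℓ : ℝ → ℂ) =ᵐ[volume.restrict E]
        fun s : ℝ => (Real.sqrt (2 * Real.pi) : ℂ)⁻¹ * Complex.exp (Complex.I * ℓ * s) := by
  have hπ := measurePreserving_coe_restrict_of_transCongr2pi hcong
  obtain ⟨ψ, hψ, hψπ⟩ := exists_measurable_ae_leftInverse_coe_of_transCongr2pi hcong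
  let U := Lp.compMeasurePreservingEquiv (E := ℂ) (p := 2) ℂ hπ hψ hψπ
  refine ⟨AddCircle.volumeFourierBasis.map U, fun ℓ => ?_⟩
  filter_upwards [Lp.coeFn_compMeasurePreservingEquiv ℂ hπ hψ hψπ (AddCircle.volumeFourierBasis ℓ),
    hπ.quasiMeasurePreserving.ae_eq_comp (AddCircle.coeFn_volumeFourierBasis ℓ)]
    with s hcomp hfourier
  rw [HilbertBasis.map_apply, hcomp, hfourier, Function.comp_apply, fourier_coe_apply]
  congr 2
  push_cast
  field_simp

/-- If E is 2π-translation congruent to [0, 2π), then the functions (2π)^{-1/2} e^{iℓs}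
restricted to E, ℓ ∈ ℤ, form an orthonormal (Hilbert) basis of L²(E). -/
theorem exponentials_orthonormal_basis_of_congruent (E : Set ℝ) (hE : MeasurableSet E)
    (hcong : TransCongr2pi E (Set.Ico 0 (2 * Real.pi))) :
    ∃ b : HilbertBasis ℤ ℂ (Lp ℂ 2 (volume.restrict E)),
      ∀ ℓ : ℤ, (b ℓ : ℝ → ℂ) =ᵐ[volume.restrict E]
        fun s : ℝ => (Real.sqrt (2 * Real.pi) : ℂ)⁻¹ * Complex.exp (Complex.I * ℓ * s) :=
  exponentials_orthonormal_basis_of_congruent_general E hcong
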